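/- arXiv:1102.0426 — 4 statements merged into one kernel-verified Lean document; each statement's English description precedes it below -/
import Mathlib

section
/- With D a non-Lagrangian 2-distribution on U ⊆ ℝ⁴, D' its Ω-orthogonal complement, Z := P'([X,Y]) and Z' := P([X',Y']) the invariant vector fields, σ := ι_Z Ω − ι_{Z'} Ω, and ω the invariant 2-form with ω|_D = Ω|_D and kernel D': the exterior derivative of ω satisfies dω = ι_{Z−Z'}(½ Ω∧Ω) = Ω ∧ σ on U. -/
noncomputable section

/-- Vectors of `ℝ⁴`, with coordinates `(x,p,y,q) = (v 0, v 1, v 2, v 3)`. -/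
abbrev Vec : Type := Fin 4 → ℝ

/-- The standard symplectic form `Ω = dp∧dx + dq∧dy` on `ℝ⁴`. -/
def Omega (u v : Vec) : ℝ := u 1 * v 0 - u 0 * v 1 + u 3 * v 2 - u 2 * v 3

/-- Lie bracket of vector fields. -/
def vbracket (X Y : Vec → Vec) : Vec → Vec :=
  fun x => fderiv ℝ Y x (X x) - fderiv ℝ X x (Y x)

/-- Exterior derivative of a 1-form (a pointwise family of 1-form values). -/
def d1 (α : Vec → Vec → ℝ) : Vec → Vec → Vec → ℝ :=
  fun x u v => fderiv ℝ (fun y => α y v) x u - fderiv ℝ (fun y => α y u) x v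

/-- Exterior derivative of a 2-form. -/
def d2 (b : Vec → Vec → Vec → ℝ) : Vec → Vec → Vec → Vec → ℝ :=
  fun x u v w => fderiv ℝ (fun y => b y v w) x u - fderiv ℝ (fun y => b y u w) x v
    + fderiv ℝ (fun y => b y u v) x w

/-- Exterior derivative of a 3-form. -/
def d3 (c : Vec → Vec → Vec → Vec → ℝ) : Vec → Vec → Vec → Vec → Vec → ℝ :=
  fun x u v w z =>
    fderiv ℝ (fun y => c y v w z) x u - fderiv ℝ (fun y => c y u w z) x v
      + fderiv ℝ (fun y => c y u v z) x w - fderiv ℝ (fun y => c y u v w) x z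

/-- Wedge product of two 1-form values. -/
def w11 (a b : Vec → ℝ) : Vec → Vec → ℝ := fun u v => a u * b v - a v * b u

/-- Wedge product of a 2-form value with a 1-form value. -/
def w21 (b : Vec → Vec → ℝ) (t : Vec → ℝ) : Vec → Vec → Vec → ℝ :=
  fun u v w => b u v * t w - b u w * t v + b v w * t u

/-- Wedge product of two 2-form values. -/
def w22 (a b : Vec → Vec → ℝ) : Vec → Vec → Vec → Vec → ℝ :=
  fun u v w z => a u v * b w z - a u w * b v z + a u z * b v w
    + a v w * b u z - a v z * b u w + a w z * b u v

/-!
The form `ω = ½ (Ω(P·,·) + Ω(·,P·))` depends linearly on `P`, so `dω` at a point is the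
alternation of the same expression in `dP`. Both `dω` and `Ω ∧ σ` are alternating trilinear forms
and the adapted symplectic frame `(X, Y, X', Y')` is a basis of `ℝ⁴`, so it suffices to compare
them on its four increasing triples. There `P = Ω(·, Y) X - Ω(·, X) Y`; differentiating
`P X = X`, `P Y = Y`, `P X' = P Y' = 0` expresses `dP` on the frame through the derivatives of the
frame vectors, and the differentiated orthogonality relations `Ω(X, X') = … = 0` make the two
sides agree. The identity `ι_z (½ Ω ∧ Ω) = Ω ∧ ι_z Ω` is pointwise algebra.
-/

open Filter Topology

theorem eq_zero_of_antisymm_of_lt {ι R : Type*} [LinearOrder ι] [NonAssocRing R] [NoZeroDivisors R]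
    [CharZero R] {G : ι → ι → ι → R}
    (h12 : ∀ i j k, G j i k = -G i j k) (h23 : ∀ i j k, G i k j = -G i j k)
    (hlt : ∀ i j k, i < j → j < k → G i j k = 0) (i j k : ι) : G i j k = 0 := by
  have cycle : ∀ i j k, G i j k = G j k i := fun i j k => by rw [h23 j i k, h12 i j k, neg_neg]
  have h13 : ∀ i j k, G k j i = -G i j k := fun i j k => by rw [h12 j k i, ← cycle]
  rcases lt_trichotomy i j with hij | rfl | hij
  · rcases lt_trichotomy j k with hjk | rfl | hjk
    · exact hlt i j k hij hjk
    · exact CharZero.eq_neg_self_iff.mp (h23 i j j)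
    · rcases lt_trichotomy i k with hik | rfl | hik
      · rw [← neg_eq_zero, ← h23, hlt i k j hik hjk]
      · exact CharZero.eq_neg_self_iff.mp (h13 i j i)
      · rw [cycle, cycle, hlt k i j hik hij]
  · exact CharZero.eq_neg_self_iff.mp (h12 i i k)
  · rcases lt_trichotomy i k with hik | rfl | hik
    · rw [← neg_eq_zero, ← h12, hlt j i k hij hik]
    · exact CharZero.eq_neg_self_iff.mp (h13 i j i)
    · rcases lt_trichotomy j k with hjk | rfl | hjk
      · rw [cycle, hlt j k i hjk hik]
      · exact CharZero.eq_neg_self_iff.mp (h23 i j j)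
      · rw [← neg_eq_zero, ← h13, hlt k j i hjk hij]

theorem Module.Basis.eq_zero_of_antisymm_of_lt {ι R M : Type*} [LinearOrder ι] [CommRing R]
    [NoZeroDivisors R] [CharZero R] [AddCommGroup M] [Module R M] (b : Module.Basis ι R M)
    {H : M → M → M → R} (hlin : ∀ v w, IsLinearMap R fun u => H u v w)
    (h12 : ∀ u v w, H v u w = -H u v w) (h23 : ∀ u v w, H u w v = -H u v w)
    (hlt : ∀ i j k, i < j → j < k → H (b i) (b j) (b k) = 0) (u v w : M) : H u v w = 0 := by
  have cycle : ∀ u v w, H u v w = H v w u := fun u v w => by rw [h23 v u w, h12 u v w, neg_neg]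
  have vanish : ∀ v w, (∀ i, H (b i) v w = 0) → ∀ u, H u v w = 0 := fun v w h u =>
    LinearMap.congr_fun (b.ext (f₁ := IsLinearMap.mk' _ (hlin v w)) (f₂ := 0) h) u
  have h3 : ∀ i j k, H (b i) (b j) (b k) = 0 :=
    _root_.eq_zero_of_antisymm_of_lt (fun _ _ _ => h12 _ _ _) (fun _ _ _ => h23 _ _ _) hlt
  have h2 : ∀ i j w, H (b i) (b j) w = 0 := fun i j w => by
    rw [← cycle]; exact vanish _ _ (fun k => h3 k i j) w
  have h1 : ∀ i v w, H (b i) v w = 0 := fun i v w => by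
    rw [cycle]; exact vanish _ _ (fun j => by rw [← cycle]; exact h2 i j w) v
  exact vanish v w (fun i => h1 i v w) u

theorem fderiv_bilinear_eq_of_eventuallyEq {𝕜 E F G H : Type*} [NontriviallyNormedField 𝕜]
    [NormedAddCommGroup E] [NormedSpace 𝕜 E] [NormedAddCommGroup F] [NormedSpace 𝕜 F]
    [NormedAddCommGroup G] [NormedSpace 𝕜 G] [NormedAddCommGroup H] [NormedSpace 𝕜 H]
    (B : F →L[𝕜] G →L[𝕜] H) {f : E → F} {g : E → G} {h : E → H} {x : E}
    (hf : DifferentiableAt 𝕜 f x) (hg : DifferentiableAt 𝕜 g x)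
    (hfg : (fun y => B (f y) (g y)) =ᶠ[𝓝 x] h) (t : E) :
    B (fderiv 𝕜 f x t) (g x) + B (f x) (fderiv 𝕜 g x t) = fderiv 𝕜 h x t := by
  rw [← hfg.fderiv_eq, B.fderiv_of_bilinear hf hg]
  simp [add_comm]

lemma Omega_swap (u v : Vec) : Omega v u = -Omega u v := by
  simp only [Omega]; ring

@[simp] lemma Omega_self (u : Vec) : Omega u u = 0 := by
  simp only [Omega]; ring

@[simp] lemma Omega_add_left (u u' v : Vec) : Omega (u + u') v = Omega u v + Omega u' v := by
  simp only [Omega, Pi.add_apply]; ring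

@[simp] lemma Omega_add_right (u v v' : Vec) : Omega u (v + v') = Omega u v + Omega u v' := by
  simp only [Omega, Pi.add_apply]; ring

@[simp] lemma Omega_smul_left (c : ℝ) (u v : Vec) : Omega (c • u) v = c * Omega u v := by
  simp only [Omega, Pi.smul_apply, smul_eq_mul]; ring

@[simp] lemma Omega_smul_right (c : ℝ) (u v : Vec) : Omega u (c • v) = c * Omega u v := by
  simp only [Omega, Pi.smul_apply, smul_eq_mul]; ring

@[simp] lemma Omega_sub_left (u u' v : Vec) : Omega (u - u') v = Omega u v - Omega u' v := by
  simp only [Omega, Pi.sub_apply]; ring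

@[simp] lemma Omega_neg_left (u v : Vec) : Omega (-u) v = -Omega u v := by
  simp only [Omega, Pi.neg_apply]; ring

def omegaCLM : Vec →L[ℝ] Vec →L[ℝ] ℝ :=
  LinearMap.toContinuousLinearMap <| LinearMap.toContinuousLinearMap.toLinearMap ∘ₗ
    LinearMap.mk₂ ℝ Omega Omega_add_left Omega_smul_left Omega_add_right Omega_smul_right

@[simp] lemma omegaCLM_apply (u v : Vec) : omegaCLM u v = Omega u v := rfl

lemma w22_Omega_Omega_div_two (z u v w : Vec) :
    w22 Omega Omega z u v w / 2 = w21 Omega (Omega z) u v w := by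
  simp only [w22, w21, Omega]; ring

-- For `Q = P` this is the paper's `ω`, with `Ω(u, P v)` rewritten as `-Ω(P v, u)`.
def endoForm (Q : Vec →L[ℝ] Vec) (u v : Vec) : ℝ := (Omega (Q u) v - Omega (Q v) u) / 2

lemma fderiv_endoForm {P : Vec → Vec →L[ℝ] Vec} {x : Vec} (hP : DifferentiableAt ℝ P x)
    (u v t : Vec) :
    fderiv ℝ (fun y => endoForm (P y) u v) x t = endoForm (fderiv ℝ P x t) u v := by
  let L : (Vec →L[ℝ] Vec) →L[ℝ] ℝ := (2⁻¹ : ℝ) •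
    (omegaCLM.flip v ∘L ContinuousLinearMap.apply ℝ Vec u -
      omegaCLM.flip u ∘L ContinuousLinearMap.apply ℝ Vec v)
  have hL : ∀ Q, L Q = endoForm Q u v := fun Q => by
    simp only [L, endoForm, smul_apply, sub_apply, ContinuousLinearMap.comp_apply,
      ContinuousLinearMap.apply_apply, ContinuousLinearMap.flip_apply, omegaCLM_apply, smul_eq_mul]
    ring
  simp_rw [← hL]
  rw [fderiv_fun_comp x L.differentiableAt hP, L.fderiv]
  rfl

lemma d2_endoForm {P : Vec → Vec →L[ℝ] Vec} {x : Vec} (hP : DifferentiableAt ℝ P x)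
    (u v w : Vec) :
    d2 (fun y => endoForm (P y)) x u v w = endoForm (fderiv ℝ P x u) v w -
      endoForm (fderiv ℝ P x v) u w + endoForm (fderiv ℝ P x w) u v := by
  simp only [d2, fderiv_endoForm hP]

structure IsSymplecticFrame (X Y X' Y' : Vec) : Prop where
  omega_X_Y : Omega X Y = 1
  omega_X'_Y' : Omega X' Y' = 1
  omega_X_X' : Omega X X' = 0
  omega_X_Y' : Omega X Y' = 0
  omega_Y_X' : Omega Y X' = 0
  omega_Y_Y' : Omega Y Y' = 0

namespace IsSymplecticFrame

variable {X Y X' Y' : Vec}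

theorem linearIndependent (h : IsSymplecticFrame X Y X' Y') :
    LinearIndependent ℝ ![X, Y, X', Y'] := by
  rw [Fintype.linearIndependent_iff]
  intro c hc
  simp only [Fin.sum_univ_four, Matrix.cons_val] at hc
  have pair : ∀ z, Omega (c 0 • X + c 1 • Y + c 2 • X' + c 3 • Y') z = 0 := fun z => by
    rw [hc]; simp [Omega]
  have h0 := pair Y
  have h1 := pair X
  have h2 := pair Y'
  have h3 := pair X'
  simp only [Omega_add_left, Omega_smul_left, Omega_self, Omega_swap X Y, Omega_swap X' Y',
    Omega_swap X X', Omega_swap Y X', Omega_swap X Y', Omega_swap Y Y', h.omega_X_Y,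
    h.omega_X'_Y', h.omega_X_X', h.omega_X_Y', h.omega_Y_X', h.omega_Y_Y'] at h0 h1 h2 h3
  intro i
  fin_cases i <;> simp only [Fin.zero_eta, Fin.mk_one, Fin.reduceFinMk, Fin.isValue] <;> linarith

def basis (h : IsSymplecticFrame X Y X' Y') : Module.Basis (Fin 4) ℝ Vec :=
  basisOfLinearIndependentOfCardEqFinrank h.linearIndependent (by simp)

@[simp] lemma coe_basis (h : IsSymplecticFrame X Y X' Y') : ⇑h.basis = ![X, Y, X', Y'] :=
  coe_basisOfLinearIndependentOfCardEqFinrank _ _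

end IsSymplecticFrame

structure IsAdaptedFrame (P : Vec →L[ℝ] Vec) (X Y X' Y' : Vec) : Prop
    extends IsSymplecticFrame X Y X' Y' where
  P_X : P X = X
  P_Y : P Y = Y
  P_X' : P X' = 0
  P_Y' : P Y' = 0

theorem IsAdaptedFrame.apply_eq {P : Vec →L[ℝ] Vec} {X Y X' Y' : Vec}
    (h : IsAdaptedFrame P X Y X' Y') (a : Vec) : P a = Omega a Y • X - Omega a X • Y := by
  have hP : P = (omegaCLM.flip Y).smulRight X - (omegaCLM.flip X).smulRight Y := by
    apply ContinuousLinearMap.coe_injective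
    refine h.basis.ext fun i => ?_
    fin_cases i <;> simp [h.P_X, h.P_Y, h.P_X', h.P_Y', Omega_swap X Y, Omega_swap X X',
      Omega_swap Y X', Omega_swap X Y', Omega_swap Y Y', h.omega_X_Y, h.omega_X_X', h.omega_X_Y',
      h.omega_Y_X', h.omega_Y_Y']
  simp [hP]

structure IsAdaptedFrameDeriv (P : Vec →L[ℝ] Vec) (DP : Vec →L[ℝ] Vec →L[ℝ] Vec)
    (X Y X' Y' : Vec) (DX DY DX' DY' : Vec →L[ℝ] Vec) : Prop where
  DP_X : ∀ t, DP t X = DX t - P (DX t)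
  DP_Y : ∀ t, DP t Y = DY t - P (DY t)
  DP_X' : ∀ t, DP t X' = -P (DX' t)
  DP_Y' : ∀ t, DP t Y' = -P (DY' t)
  omega_DX_X' : ∀ t, Omega (DX t) X' = Omega (DX' t) X
  omega_DX_Y' : ∀ t, Omega (DX t) Y' = Omega (DY' t) X
  omega_DY_X' : ∀ t, Omega (DY t) X' = Omega (DX' t) Y
  omega_DY_Y' : ∀ t, Omega (DY t) Y' = Omega (DY' t) Y

theorem IsAdaptedFrameDeriv.alt_endoForm_eq_w21 {P : Vec →L[ℝ] Vec}
    {DP : Vec →L[ℝ] Vec →L[ℝ] Vec} {X Y X' Y' : Vec} {DX DY DX' DY' : Vec →L[ℝ] Vec}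
    (hF : IsAdaptedFrame P X Y X' Y') (hD : IsAdaptedFrameDeriv P DP X Y X' Y' DX DY DX' DY')
    (u v w : Vec) :
    endoForm (DP u) v w - endoForm (DP v) u w + endoForm (DP w) u v =
      w21 Omega (Omega (DY X - DX Y - P (DY X - DX Y) - P (DY' X' - DX' Y'))) u v w := by
  set z := DY X - DX Y - P (DY X - DX Y) - P (DY' X' - DX' Y')
  rw [← sub_eq_zero]
  refine hF.basis.eq_zero_of_antisymm_of_lt (H := fun u v w =>
    endoForm (DP u) v w - endoForm (DP v) u w + endoForm (DP w) u v - w21 Omega (Omega z) u v w)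
    (fun v w => ⟨fun a b => ?_, fun c a => ?_⟩) (fun u v w => ?_) (fun u v w => ?_) ?_ u v w
  · simp only [endoForm, w21, Omega, map_add, add_apply, Pi.add_apply]; ring
  · simp only [endoForm, w21, Omega, map_smul, smul_apply, Pi.smul_apply, smul_eq_mul]; ring
  · simp only [endoForm, w21, Omega]; ring
  · simp only [endoForm, w21, Omega]; ring
  intro i j k hij hjk
  fin_cases i <;> fin_cases j <;> fin_cases k <;> simp at hij hjk ⊢
  all_goals
    simp only [endoForm, w21, z, hD.DP_X, hD.DP_Y, hD.DP_X', hD.DP_Y', hF.apply_eq,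
      Omega_sub_left, Omega_smul_left, Omega_neg_left, Omega_self, Omega_swap X Y,
      hF.omega_X_Y, hF.omega_X'_Y', hF.omega_X_X', hF.omega_X_Y', hF.omega_Y_X', hF.omega_Y_Y']
    linarith [hD.omega_DX_X' X, hD.omega_DX_X' Y, hD.omega_DX_X' X', hD.omega_DX_X' Y',
      hD.omega_DX_Y' X, hD.omega_DX_Y' Y, hD.omega_DX_Y' X', hD.omega_DX_Y' Y',
      hD.omega_DY_X' X, hD.omega_DY_X' Y, hD.omega_DY_X' X', hD.omega_DY_X' Y',
      hD.omega_DY_Y' X, hD.omega_DY_Y' Y, hD.omega_DY_Y' X', hD.omega_DY_Y' Y']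

theorem isAdaptedFrameDeriv_fderiv {P : Vec → Vec →L[ℝ] Vec}
    {X Y X' Y' : Vec → Vec} {x : Vec}
    (hF : ∀ᶠ y in 𝓝 x, IsAdaptedFrame (P y) (X y) (Y y) (X' y) (Y' y))
    (hP : DifferentiableAt ℝ P x) (hX : DifferentiableAt ℝ X x) (hY : DifferentiableAt ℝ Y x)
    (hX' : DifferentiableAt ℝ X' x) (hY' : DifferentiableAt ℝ Y' x) :
    IsAdaptedFrameDeriv (P x) (fderiv ℝ P x) (X x) (Y x) (X' x) (Y' x)
      (fderiv ℝ X x) (fderiv ℝ Y x) (fderiv ℝ X' x) (fderiv ℝ Y' x) := by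
  have dP {f g : Vec → Vec} (hf : DifferentiableAt ℝ f x) (hfg : ∀ᶠ y in 𝓝 x, P y (f y) = g y)
      (t : Vec) : fderiv ℝ P x t (f x) + P x (fderiv ℝ f x t) = fderiv ℝ g x t :=
    fderiv_bilinear_eq_of_eventuallyEq (ContinuousLinearMap.id ℝ (Vec →L[ℝ] Vec)) hP hf hfg t
  have dOmega {f g : Vec → Vec} (hf : DifferentiableAt ℝ f x) (hg : DifferentiableAt ℝ g x)
      (hfg : ∀ᶠ y in 𝓝 x, Omega (f y) (g y) = 0) (t : Vec) :
      Omega (fderiv ℝ f x t) (g x) = Omega (fderiv ℝ g x t) (f x) := by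
    have := fderiv_bilinear_eq_of_eventuallyEq omegaCLM hf hg hfg t
    simp only [omegaCLM_apply, Omega_swap _ (f x), fderiv_fun_const, Pi.zero_apply,
      zero_apply] at this
    linarith
  exact
    { DP_X := fun t => eq_sub_of_add_eq (dP hX (hF.mono fun _ h => h.P_X) t)
      DP_Y := fun t => eq_sub_of_add_eq (dP hY (hF.mono fun _ h => h.P_Y) t)
      DP_X' := fun t => eq_neg_of_add_eq_zero_left <| by
        simpa using dP hX' (hF.mono fun _ h => h.P_X') t
      DP_Y' := fun t => eq_neg_of_add_eq_zero_left <| by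
        simpa using dP hY' (hF.mono fun _ h => h.P_Y') t
      omega_DX_X' := dOmega hX hX' (hF.mono fun _ h => h.omega_X_X')
      omega_DX_Y' := dOmega hX hY' (hF.mono fun _ h => h.omega_X_Y')
      omega_DY_X' := dOmega hY hX' (hF.mono fun _ h => h.omega_Y_X')
      omega_DY_Y' := dOmega hY hY' (hF.mono fun _ h => h.omega_Y_Y') }

/-- for a non-Lagrangian 2-distribution `D` on `U ⊆ ℝ⁴`, the
invariant 2-form `ω` satisfies `dω = ι_{Z−Z'}(½ Ω∧Ω) = Ω ∧ σ` on `U`. -/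
theorem stmt_6
    (U : Set Vec) (hU : IsOpen U)
    (X Y X' Y' : Vec → Vec) (P : Vec → Vec →L[ℝ] Vec)
    (hX : ContDiffOn ℝ (⊤ : ℕ∞) X U) (hY : ContDiffOn ℝ (⊤ : ℕ∞) Y U)
    (hX' : ContDiffOn ℝ (⊤ : ℕ∞) X' U) (hY' : ContDiffOn ℝ (⊤ : ℕ∞) Y' U)
    (hP : ContDiffOn ℝ (⊤ : ℕ∞) P U)
    (hXY : ∀ x ∈ U, Omega (X x) (Y x) = 1)
    (hX'Y' : ∀ x ∈ U, Omega (X' x) (Y' x) = 1)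
    (horth : ∀ x ∈ U, Omega (X x) (X' x) = 0 ∧ Omega (X x) (Y' x) = 0 ∧
      Omega (Y x) (X' x) = 0 ∧ Omega (Y x) (Y' x) = 0)
    (hProj : ∀ x ∈ U, P x (X x) = X x ∧ P x (Y x) = Y x ∧
      P x (X' x) = 0 ∧ P x (Y' x) = 0)
    (Z Z' : Vec → Vec)
    (hZ : Z = fun x => vbracket X Y x - P x (vbracket X Y x))
    (hZ' : Z' = fun x => P x (vbracket X' Y' x))
    (ρ ρ' σ : Vec → Vec → ℝ)
    (hρ : ρ = fun x v => Omega (Z x) v)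
    (hρ' : ρ' = fun x v => Omega (Z' x) v)
    (hσ : σ = fun x v => ρ x v - ρ' x v)
    (ω : Vec → Vec → Vec → ℝ)
    (hω : ω = fun x u v => (Omega (P x u) v + Omega u (P x v)) / 2)
    :
    ∀ x ∈ U, ∀ u v w : Vec,
      d2 ω x u v w = w22 Omega Omega (Z x - Z' x) u v w / 2 ∧
      d2 ω x u v w = w21 Omega (σ x) u v w := by
  intro x hx u v w
  have hUx : U ∈ 𝓝 x := hU.mem_nhds hx
  have diff {E : Type} [NormedAddCommGroup E] [NormedSpace ℝ E] {F : Vec → E}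
      (hF : ContDiffOn ℝ (⊤ : ℕ∞) F U) : DifferentiableAt ℝ F x :=
    (hF.contDiffAt hUx).differentiableAt (by simp)
  have hFrame : ∀ y ∈ U, IsAdaptedFrame (P y) (X y) (Y y) (X' y) (Y' y) := fun y hy =>
    have ⟨hXX', hXY', hYX', hYY'⟩ := horth y hy
    have ⟨hPX, hPY, hPX', hPY'⟩ := hProj y hy
    ⟨⟨hXY y hy, hX'Y' y hy, hXX', hXY', hYX', hYY'⟩, hPX, hPY, hPX', hPY'⟩
  have hDeriv := isAdaptedFrameDeriv_fderiv (eventually_of_mem hUx hFrame)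
    (diff hP) (diff hX) (diff hY) (diff hX') (diff hY')
  have hωP : ω = fun y => endoForm (P y) := by
    funext y a b
    simp only [hω, endoForm, Omega_swap (P y b) a, sub_eq_add_neg]
  have hσx : σ x = Omega (Z x - Z' x) := by
    funext t
    simp only [hσ, hρ, hρ', Omega_sub_left]
  have hdω : d2 ω x u v w = w21 Omega (σ x) u v w := by
    rw [hωP, d2_endoForm (diff hP), hDeriv.alt_endoForm_eq_w21 (hFrame x hx), hσx, hZ, hZ']
    simp only [vbracket, sub_sub]
  exact ⟨hdω.trans (by rw [hσx, w22_Omega_Omega_div_two]), hdω⟩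
end
end

section
/- With D a non-Lagrangian 2-distribution on U ⊆ ℝ⁴ and the invariant forms ω, ρ, ρ', σ := ρ − ρ' as defined: the following equalities of 4-forms hold on U: ω ∧ dσ = d(ω ∧ σ) = d(ω ∧ ρ) = Ω ∧ dρ. (These are the four equivalent descriptions of the first scalar invariant I¹_D = ∗(ω ∧ dσ).) -/
noncomputable section

/-!
On `U` the fields `X, Y, X', Y'` form a Darboux frame, so `ω = ι_X Ω ∧ ι_Y Ω` and
`Ω - ω = ι_X' Ω ∧ ι_Y' Ω`. Since `Z' = P[X',Y']` lies in `D` and `Z = [X,Y] - P[X,Y]` in `D'`,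
`ρ'` is a combination of `ι_X Ω, ι_Y Ω` and `ρ` one of `ι_X' Ω, ι_Y' Ω`; hence `ω ∧ ρ' = 0` and
`(Ω - ω) ∧ ρ = 0` pointwise. This gives the second equality, and the third because `Ω` is
constant. For the first, `d(ω ∧ σ) = dω ∧ σ + ω ∧ dσ` and `dω = Ω ∧ σ`, so that
`dω ∧ σ = Ω ∧ σ ∧ σ = 0`. Both sides of `dω = Ω ∧ σ` are alternating and trilinear, and on the
triples of the frame the identity reduces to the derivatives of the constant entries of its Gram
matrix.
-/

open Filter Topology

namespace Omega

theorem antisymm (u v : Vec) : Omega u v = -Omega v u := by unfold Omega; ring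

@[simp] theorem self (u : Vec) : Omega u u = 0 := by unfold Omega; ring

theorem isBilinearMap : IsBilinearMap ℝ Omega where
  add_left _ _ _ := by simp only [Omega, Pi.add_apply]; ring
  smul_left _ _ _ := by simp only [Omega, Pi.smul_apply, smul_eq_mul]; ring
  add_right _ _ _ := by simp only [Omega, Pi.add_apply]; ring
  smul_right _ _ _ := by simp only [Omega, Pi.smul_apply, smul_eq_mul]; ring

@[simp] theorem add_left (u v w : Vec) : Omega (u + v) w = Omega u w + Omega v w :=
  isBilinearMap.add_left u v w

@[simp] theorem sub_left (u v w : Vec) : Omega (u - v) w = Omega u w - Omega v w := by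
  unfold Omega; simp only [Pi.sub_apply]; ring

@[simp] theorem smul_left (c : ℝ) (u w : Vec) : Omega (c • u) w = c * Omega u w :=
  isBilinearMap.smul_left c u w

variable {f g : Vec → Vec} {x : Vec}

theorem hasFDerivAt (hf : DifferentiableAt ℝ f x) (hg : DifferentiableAt ℝ g x) :
    HasFDerivAt (fun y => Omega (f y) (g y))
      (isBilinearMap.toContinuousBilinearMap.precompR Vec (f x) (fderiv ℝ g x)
        + isBilinearMap.toContinuousBilinearMap.precompL Vec (fderiv ℝ f x) (g x)) x :=
  isBilinearMap.toContinuousBilinearMap.hasFDerivAt_of_bilinear hf.hasFDerivAt hg.hasFDerivAt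

@[fun_prop]
theorem differentiableAt (hf : DifferentiableAt ℝ f x) (hg : DifferentiableAt ℝ g x) :
    DifferentiableAt ℝ (fun y => Omega (f y) (g y)) x :=
  (hasFDerivAt hf hg).differentiableAt

theorem fderiv_apply (hf : DifferentiableAt ℝ f x) (hg : DifferentiableAt ℝ g x) (u : Vec) :
    fderiv ℝ (fun y => Omega (f y) (g y)) x u
      = Omega (fderiv ℝ f x u) (g x) + Omega (f x) (fderiv ℝ g x u) := by
  simp [(hasFDerivAt hf hg).fderiv, add_comm]

theorem fderiv_add_fderiv_eq_zero {c : ℝ} (hf : DifferentiableAt ℝ f x)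
    (hg : DifferentiableAt ℝ g x) (h : ∀ᶠ y in 𝓝 x, Omega (f y) (g y) = c) (u : Vec) :
    Omega (fderiv ℝ f x u) (g x) + Omega (f x) (fderiv ℝ g x u) = 0 := by
  rw [← fderiv_apply hf hg,
    Filter.EventuallyEq.fderiv_eq (h : (fun y => Omega (f y) (g y)) =ᶠ[𝓝 x] fun _ => c)]
  simp

end Omega

theorem differentiableAt_vbracket {X Y : Vec → Vec} {x : Vec} (hX : ContDiffAt ℝ 2 X x)
    (hY : ContDiffAt ℝ 2 Y x) : DifferentiableAt ℝ (vbracket X Y) x :=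
  ((hY.fderiv_right le_rfl).differentiableAt one_ne_zero |>.clm_apply
      (hX.differentiableAt two_ne_zero)).sub
    ((hX.fderiv_right le_rfl).differentiableAt one_ne_zero |>.clm_apply
      (hY.differentiableAt two_ne_zero))

def w31 (c : Vec → Vec → Vec → ℝ) (t : Vec → ℝ) : Vec → Vec → Vec → Vec → ℝ :=
  fun u v w z => c u v w * t z - c u v z * t w + c u w z * t v - c v w z * t u

theorem w31_w21_self (b : Vec → Vec → ℝ) (t : Vec → ℝ) : w31 (w21 b t) t = 0 := by
  funext u v w z
  simp only [w31, w21, Pi.zero_apply]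
  ring

/-- `ι_e Ω ∧ ι_f Ω`: for a Darboux pair `(e, f)` this is `Ω` on `span {e, f}`, vanishing on the
`Ω`-orthogonal complement. -/
def planeForm (e f : Vec) : Vec → Vec → ℝ := w11 (Omega e) (Omega f)

theorem w21_add_left (b b' : Vec → Vec → ℝ) (t : Vec → ℝ) :
    w21 (b + b') t = w21 b t + w21 b' t := by
  funext u v w
  simp only [w21, Pi.add_apply]
  ring

theorem w21_sub_right (b : Vec → Vec → ℝ) (t t' : Vec → ℝ) :
    w21 b (fun v => t v - t' v) = w21 b t - w21 b t' := by
  funext u v w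
  simp only [w21, Pi.sub_apply]
  ring

theorem w21_planeForm_omega_smul_add_eq_zero (e f : Vec) (r s : ℝ) :
    w21 (planeForm e f) (Omega (r • e + s • f)) = 0 := by
  funext u v w
  simp only [w21, planeForm, w11, Omega, Pi.add_apply, Pi.smul_apply, smul_eq_mul,
    Pi.zero_apply]
  ring

def omegaDeriv (A : Vec →L[ℝ] Vec) : Vec → Vec → ℝ := fun u v => Omega (A u) v - Omega (A v) u

section ExteriorDerivative

variable {x : Vec}

theorem d2_congr {b b' : Vec → Vec → Vec → ℝ} (h : b =ᶠ[𝓝 x] b') : d2 b x = d2 b' x := by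
  have key (v w : Vec) : fderiv ℝ (fun y => b y v w) x = fderiv ℝ (fun y => b' y v w) x :=
    Filter.EventuallyEq.fderiv_eq (h.mono fun y hy => congrFun (congrFun hy v) w)
  funext u v w
  simp only [d2, key]

theorem d3_congr {c c' : Vec → Vec → Vec → Vec → ℝ} (h : c =ᶠ[𝓝 x] c') : d3 c x = d3 c' x := by
  have key (v w z : Vec) : fderiv ℝ (fun y => c y v w z) x = fderiv ℝ (fun y => c' y v w z) x :=
    Filter.EventuallyEq.fderiv_eq (h.mono fun y hy => congrFun (congrFun (congrFun hy v) w) z)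
  funext u v w z
  simp only [d3, key]

theorem d2_const (b : Vec → Vec → ℝ) : d2 (fun _ => b) x = 0 := by
  funext u v w
  simp [d2]

theorem d2_w11 {a b : Vec → Vec → ℝ} (ha : ∀ v, DifferentiableAt ℝ (fun y => a y v) x)
    (hb : ∀ v, DifferentiableAt ℝ (fun y => b y v) x) :
    d2 (fun y => w11 (a y) (b y)) x = w21 (d1 a x) (b x) - w21 (d1 b x) (a x) := by
  have key (u v w : Vec) : fderiv ℝ (fun y => w11 (a y) (b y) v w) x u
      = fderiv ℝ (fun y => a y v) x u * b x w + a x v * fderiv ℝ (fun y => b y w) x u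
        - (fderiv ℝ (fun y => a y w) x u * b x v + a x w * fderiv ℝ (fun y => b y v) x u) := by
    have h := ((ha v).hasFDerivAt.fun_mul (hb w).hasFDerivAt).fun_sub
      ((ha w).hasFDerivAt.fun_mul (hb v).hasFDerivAt)
    simp only [w11, h.fderiv, sub_apply, add_apply, smul_apply, smul_eq_mul]
    ring
  funext u v w
  simp only [d2, key, w21, d1, Pi.sub_apply]
  ring

theorem d3_w21 {b : Vec → Vec → Vec → ℝ} {t : Vec → Vec → ℝ}
    (hb : ∀ v w, DifferentiableAt ℝ (fun y => b y v w) x)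
    (ht : ∀ v, DifferentiableAt ℝ (fun y => t y v) x) :
    d3 (fun y => w21 (b y) (t y)) x = w31 (d2 b x) (t x) + w22 (b x) (d1 t x) := by
  have key (u v w z : Vec) : fderiv ℝ (fun y => w21 (b y) (t y) v w z) x u
      = fderiv ℝ (fun y => b y v w) x u * t x z + b x v w * fderiv ℝ (fun y => t y z) x u
        - (fderiv ℝ (fun y => b y v z) x u * t x w + b x v z * fderiv ℝ (fun y => t y w) x u)
        + (fderiv ℝ (fun y => b y w z) x u * t x v + b x w z * fderiv ℝ (fun y => t y v) x u) := by
    have h := (((hb v w).hasFDerivAt.fun_mul (ht z).hasFDerivAt).fun_sub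
      ((hb v z).hasFDerivAt.fun_mul (ht w).hasFDerivAt)).fun_add
      ((hb w z).hasFDerivAt.fun_mul (ht v).hasFDerivAt)
    simp only [w21, h.fderiv, sub_apply, add_apply, smul_apply, smul_eq_mul]
    ring
  funext u v w z
  simp only [d3, key, w31, w22, d2, d1, Pi.add_apply]
  ring

theorem d1_omega {f : Vec → Vec} (hf : DifferentiableAt ℝ f x) :
    d1 (fun y => Omega (f y)) x = omegaDeriv (fderiv ℝ f x) := by
  funext u v
  simp only [d1, omegaDeriv, Omega.fderiv_apply hf (differentiableAt_const _),
    fderiv_const_apply]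
  simp [Omega]

theorem w22_d1_eq_d3_w21 {b : Vec → Vec → Vec → ℝ} {t : Vec → Vec → ℝ}
    (hb : ∀ v w, DifferentiableAt ℝ (fun y => b y v w) x)
    (ht : ∀ v, DifferentiableAt ℝ (fun y => t y v) x) (hdb : d2 b x = w21 Omega (t x))
    (u v w z : Vec) :
    w22 (b x) (d1 t x) u v w z = d3 (fun y => w21 (b y) (t y)) x u v w z := by
  rw [d3_w21 hb ht, hdb, w31_w21_self]
  simp

theorem d3_w21_eq_w22_omega {b : Vec → Vec → Vec → ℝ} {t : Vec → Vec → ℝ}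
    (ht : ∀ v, DifferentiableAt ℝ (fun y => t y v) x)
    (h : ∀ᶠ y in 𝓝 x, w21 (b y) (t y) = w21 Omega (t y)) (u v w z : Vec) :
    d3 (fun y => w21 (b y) (t y)) x u v w z = w22 Omega (d1 t x) u v w z := by
  rw [d3_congr h, d3_w21 (b := fun _ => Omega) (fun _ _ => differentiableAt_const _) ht, d2_const]
  simp [w31]

end ExteriorDerivative

structure IsDarbouxFrame (e₁ f₁ e₂ f₂ : Vec) : Prop where
  omega_e₁_f₁ : Omega e₁ f₁ = 1
  omega_e₂_f₂ : Omega e₂ f₂ = 1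
  omega_e₁_e₂ : Omega e₁ e₂ = 0
  omega_e₁_f₂ : Omega e₁ f₂ = 0
  omega_f₁_e₂ : Omega f₁ e₂ = 0
  omega_f₁_f₂ : Omega f₁ f₂ = 0

namespace IsDarbouxFrame

variable {e₁ f₁ e₂ f₂ : Vec}

theorem decompose (hF : IsDarbouxFrame e₁ f₁ e₂ f₂) (u : Vec) :
    u = Omega u f₁ • e₁ + Omega e₁ u • f₁ + Omega u f₂ • e₂ + Omega e₂ u • f₂ := by
  let Ω := Omega.isBilinearMap.toLinearMap
  let coords : Module.End ℝ Vec := LinearMap.pi ![Ω.flip f₁, Ω e₁, Ω.flip f₂, Ω e₂]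
  let combine : Module.End ℝ Vec := Fintype.linearCombination ℝ ![e₁, f₁, e₂, f₂]
  have hcoords : coords * combine = 1 := by
    obtain ⟨h₁, h₂, h₃, h₄, h₅, h₆⟩ := hF
    have h₇ : Omega f₁ e₁ = -1 := by rw [Omega.antisymm, h₁]
    have h₈ : Omega f₂ e₂ = -1 := by rw [Omega.antisymm, h₂]
    ext i j
    fin_cases i <;> fin_cases j <;>
      simp [coords, combine, Ω, IsBilinearMap.toLinearMap, Omega.antisymm e₂,
        Omega.antisymm f₂ f₁, *]
  have := congrArg (· u) (mul_eq_one_comm.mp hcoords)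
  simpa [coords, combine, Ω, IsBilinearMap.toLinearMap, Fintype.linearCombination_apply,
    Fin.sum_univ_four, eq_comm] using this

theorem eq_zero_of_isLinearMap (hF : IsDarbouxFrame e₁ f₁ e₂ f₂) {t : Vec → ℝ}
    (ht : IsLinearMap ℝ t) (h₁ : t e₁ = 0) (h₂ : t f₁ = 0) (h₃ : t e₂ = 0) (h₄ : t f₂ = 0)
    (u : Vec) : t u = 0 := by
  rw [hF.decompose u]
  simp [ht.map_add, ht.map_smul, h₁, h₂, h₃, h₄]

theorem eq_zero_of_trilinear (hF : IsDarbouxFrame e₁ f₁ e₂ f₂) {H : Vec → Vec → Vec → ℝ}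
    (hlin₁ : ∀ v w, IsLinearMap ℝ (H · v w)) (hlin₂ : ∀ u w, IsLinearMap ℝ (H u · w))
    (hlin₃ : ∀ u v, IsLinearMap ℝ (H u v))
    (hswap₁₂ : ∀ u v w, H v u w = -H u v w) (hswap₂₃ : ∀ u v w, H u w v = -H u v w)
    (h₁ : H e₁ f₁ e₂ = 0) (h₂ : H e₁ f₁ f₂ = 0) (h₃ : H e₁ e₂ f₂ = 0) (h₄ : H f₁ e₂ f₂ = 0)
    (u v w : Vec) : H u v w = 0 := by
  have perm₁₂ (a b c : Vec) : H a b c = 0 ↔ H b a c = 0 := by rw [hswap₁₂, neg_eq_zero]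
  have perm₂₃ (a b c : Vec) : H a b c = 0 ↔ H a c b = 0 := by rw [hswap₂₃, neg_eq_zero]
  have diag₁₂ (a c : Vec) : H a a c = 0 := by linarith [hswap₁₂ a a c]
  have diag₂₃ (a b : Vec) : H a b b = 0 := by linarith [hswap₂₃ a b b]
  -- `perm₁₂` and `perm₂₃` are permutation lemmas, so `simp` sorts the three arguments of
  -- every frame value by ordered rewriting.
  refine hF.eq_zero_of_isLinearMap (hlin₁ v w) ?_ ?_ ?_ ?_ u <;>
    refine hF.eq_zero_of_isLinearMap (hlin₂ _ w) ?_ ?_ ?_ ?_ v <;>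
    refine hF.eq_zero_of_isLinearMap (hlin₃ _ _) ?_ ?_ ?_ ?_ w <;>
    simp only [diag₁₂, diag₂₃, perm₁₂, perm₂₃, h₁, h₂, h₃, h₄]
theorem omega_eq_planeForm_add (hF : IsDarbouxFrame e₁ f₁ e₂ f₂) :
    Omega = planeForm e₁ f₁ + planeForm e₂ f₂ := by
  funext u v
  conv_lhs => rw [hF.decompose u]
  simp only [planeForm, w11, Omega, Pi.add_apply, Pi.smul_apply, smul_eq_mul]
  ring

variable {F : Type*} [FunLike F Vec Vec] [LinearMapClass F ℝ Vec Vec] {P : F}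

theorem proj_apply (hF : IsDarbouxFrame e₁ f₁ e₂ f₂)
    (hP : P e₁ = e₁ ∧ P f₁ = f₁ ∧ P e₂ = 0 ∧ P f₂ = 0) (u : Vec) :
    P u = Omega u f₁ • e₁ + Omega e₁ u • f₁ := by
  obtain ⟨h₁, h₂, h₃, h₄⟩ := hP
  conv_lhs => rw [hF.decompose u]
  simp [h₁, h₂, h₃, h₄]

theorem sub_proj_apply (hF : IsDarbouxFrame e₁ f₁ e₂ f₂)
    (hP : P e₁ = e₁ ∧ P f₁ = f₁ ∧ P e₂ = 0 ∧ P f₂ = 0) (u : Vec) :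
    u - P u = Omega u f₂ • e₂ + Omega e₂ u • f₂ := by
  rw [hF.proj_apply hP, sub_eq_iff_eq_add]
  conv_lhs => rw [hF.decompose u]
  abel

theorem symm_proj_eq_planeForm (hF : IsDarbouxFrame e₁ f₁ e₂ f₂)
    (hP : P e₁ = e₁ ∧ P f₁ = f₁ ∧ P e₂ = 0 ∧ P f₂ = 0) (u v : Vec) :
    (Omega (P u) v + Omega u (P v)) / 2 = planeForm e₁ f₁ u v := by
  rw [hF.proj_apply hP, hF.proj_apply hP]
  simp only [planeForm, w11, Omega, Pi.add_apply, Pi.smul_apply, smul_eq_mul]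
  ring

theorem w21_planeForm_omega_proj_eq_zero (hF : IsDarbouxFrame e₁ f₁ e₂ f₂)
    (hP : P e₁ = e₁ ∧ P f₁ = f₁ ∧ P e₂ = 0 ∧ P f₂ = 0) (z : Vec) :
    w21 (planeForm e₁ f₁) (Omega (P z)) = 0 := by
  rw [hF.proj_apply hP]
  exact w21_planeForm_omega_smul_add_eq_zero _ _ _ _

theorem w21_omega_omega_sub_proj (hF : IsDarbouxFrame e₁ f₁ e₂ f₂)
    (hP : P e₁ = e₁ ∧ P f₁ = f₁ ∧ P e₂ = 0 ∧ P f₂ = 0) (z : Vec) :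
    w21 Omega (Omega (z - P z)) = w21 (planeForm e₁ f₁) (Omega (z - P z)) := by
  nth_rw 1 [hF.omega_eq_planeForm_add]
  rw [w21_add_left, hF.sub_proj_apply hP, w21_planeForm_omega_smul_add_eq_zero, add_zero]

theorem w21_omegaDeriv_sub_eq (hF : IsDarbouxFrame e₁ f₁ e₂ f₂) {A B A' B' : Vec →L[ℝ] Vec}
    (hAB : ∀ u, Omega (A u) f₁ + Omega e₁ (B u) = 0)
    (hAA' : ∀ u, Omega (A u) e₂ + Omega e₁ (A' u) = 0)
    (hAB' : ∀ u, Omega (A u) f₂ + Omega e₁ (B' u) = 0)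
    (hBA' : ∀ u, Omega (B u) e₂ + Omega f₁ (A' u) = 0)
    (hBB' : ∀ u, Omega (B u) f₂ + Omega f₁ (B' u) = 0)
    (hP : P e₁ = e₁ ∧ P f₁ = f₁ ∧ P e₂ = 0 ∧ P f₂ = 0) :
    w21 (omegaDeriv A) (Omega f₁) - w21 (omegaDeriv B) (Omega e₁)
      = w21 Omega (fun w => Omega (B e₁ - A f₁ - P (B e₁ - A f₁)) w
          - Omega (P (B' e₂ - A' f₂)) w) := by
  have ⟨g₁, g₂, g₃, g₄, g₅, g₆⟩ := hF
  have hPV := hF.proj_apply hP (B e₁ - A f₁)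
  have hPV' := hF.proj_apply hP (B' e₂ - A' f₂)
  set σ : Vec → ℝ := fun w =>
    Omega (B e₁ - A f₁ - P (B e₁ - A f₁)) w - Omega (P (B' e₂ - A' f₂)) w
  set dω := w21 (omegaDeriv A) (Omega f₁) - w21 (omegaDeriv B) (Omega e₁)
  funext u v w
  rw [← sub_eq_zero]
  refine hF.eq_zero_of_trilinear (H := fun u v w => dω u v w - w21 Omega σ u v w)
    ?lin₁ ?lin₂ ?lin₃ ?swap₁₂ ?swap₂₃ ?e₁f₁e₂ ?e₁f₁f₂ ?e₁e₂f₂ ?f₁e₂f₂ u v w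
  case lin₁ | lin₂ | lin₃ =>
    intro _ _
    constructor <;> intros <;>
      simp only [dω, σ, w21, omegaDeriv, Omega, map_add, map_smul, Pi.add_apply, Pi.sub_apply,
        Pi.smul_apply, smul_eq_mul] <;> ring
  case swap₁₂ | swap₂₃ =>
    intro _ _ _
    simp only [dω, w21, omegaDeriv, Pi.sub_apply, Omega]
    ring
  all_goals
    simp only [dω, σ, w21, omegaDeriv, Pi.sub_apply, hPV, hPV', Omega.add_left, Omega.sub_left,
      Omega.smul_left, Omega.self, g₁, g₂, g₃, g₄, g₅, g₆, Omega.antisymm f₁ e₁]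
    simp only [Omega, Pi.sub_apply] at hAB hAA' hAB' hBA' hBB' ⊢
  case e₁f₁e₂ => linear_combination hAB e₂
  case e₁f₁f₂ => linear_combination hAB f₂
  case e₁e₂f₂ => linear_combination hAA' f₂ - hAB' e₂
  case f₁e₂f₂ => linear_combination hBA' f₂ - hBB' e₂

end IsDarbouxFrame
theorem d2_planeForm {X Y X' Y' : Vec → Vec} {x : Vec}
    (hframe : ∀ᶠ y in 𝓝 x, IsDarbouxFrame (X y) (Y y) (X' y) (Y' y))
    (hX : DifferentiableAt ℝ X x) (hY : DifferentiableAt ℝ Y x)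
    (hX' : DifferentiableAt ℝ X' x) (hY' : DifferentiableAt ℝ Y' x)
    {F : Type*} [FunLike F Vec Vec] [LinearMapClass F ℝ Vec Vec] {P : F}
    (hP : P (X x) = X x ∧ P (Y x) = Y x ∧ P (X' x) = 0 ∧ P (Y' x) = 0) :
    d2 (fun y => planeForm (X y) (Y y)) x = w21 Omega (fun w =>
      Omega (vbracket X Y x - P (vbracket X Y x)) w - Omega (P (vbracket X' Y' x)) w) := by
  have hgram {f g : Vec → Vec} {c : ℝ} (hf : DifferentiableAt ℝ f x)
      (hg : DifferentiableAt ℝ g x) (h : ∀ y, IsDarbouxFrame (X y) (Y y) (X' y) (Y' y) →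
        Omega (f y) (g y) = c) :=
    Omega.fderiv_add_fderiv_eq_zero hf hg (hframe.mono h)
  unfold planeForm
  rw [d2_w11 (fun v => Omega.differentiableAt hX (differentiableAt_const v))
      (fun v => Omega.differentiableAt hY (differentiableAt_const v)), d1_omega hX, d1_omega hY]
  exact hframe.self_of_nhds.w21_omegaDeriv_sub_eq
    (hgram hX hY fun _ h => h.omega_e₁_f₁) (hgram hX hX' fun _ h => h.omega_e₁_e₂)
    (hgram hX hY' fun _ h => h.omega_e₁_f₂) (hgram hY hX' fun _ h => h.omega_f₁_e₂)
    (hgram hY hY' fun _ h => h.omega_f₁_f₂) hP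

/-- the four equivalent descriptions of the first scalar invariant:
`ω ∧ dσ = d(ω ∧ σ) = d(ω ∧ ρ) = Ω ∧ dρ` as 4-forms on `U`. -/
theorem stmt_9
    (U : Set Vec) (hU : IsOpen U)
    (X Y X' Y' : Vec → Vec) (P : Vec → Vec →L[ℝ] Vec)
    (hX : ContDiffOn ℝ (⊤ : ℕ∞) X U) (hY : ContDiffOn ℝ (⊤ : ℕ∞) Y U)
    (hX' : ContDiffOn ℝ (⊤ : ℕ∞) X' U) (hY' : ContDiffOn ℝ (⊤ : ℕ∞) Y' U)
    (hP : ContDiffOn ℝ (⊤ : ℕ∞) P U)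
    (hXY : ∀ x ∈ U, Omega (X x) (Y x) = 1)
    (hX'Y' : ∀ x ∈ U, Omega (X' x) (Y' x) = 1)
    (horth : ∀ x ∈ U, Omega (X x) (X' x) = 0 ∧ Omega (X x) (Y' x) = 0 ∧
      Omega (Y x) (X' x) = 0 ∧ Omega (Y x) (Y' x) = 0)
    (hProj : ∀ x ∈ U, P x (X x) = X x ∧ P x (Y x) = Y x ∧
      P x (X' x) = 0 ∧ P x (Y' x) = 0)
    (Z Z' : Vec → Vec)
    (hZ : Z = fun x => vbracket X Y x - P x (vbracket X Y x))
    (hZ' : Z' = fun x => P x (vbracket X' Y' x))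
    (ρ ρ' σ : Vec → Vec → ℝ)
    (hρ : ρ = fun x v => Omega (Z x) v)
    (hρ' : ρ' = fun x v => Omega (Z' x) v)
    (hσ : σ = fun x v => ρ x v - ρ' x v)
    (ω : Vec → Vec → Vec → ℝ)
    (hω : ω = fun x u v => (Omega (P x u) v + Omega u (P x v)) / 2)
    :
    ∀ x ∈ U, ∀ a b c d : Vec,
      w22 (ω x) (d1 σ x) a b c d = d3 (fun y => w21 (ω y) (σ y)) x a b c d ∧
      d3 (fun y => w21 (ω y) (σ y)) x a b c d
        = d3 (fun y => w21 (ω y) (ρ y)) x a b c d ∧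
      d3 (fun y => w21 (ω y) (ρ y)) x a b c d = w22 Omega (d1 ρ x) a b c d := by
  intro x hx a b c d
  have hxU : U ∈ 𝓝 x := hU.mem_nhds hx
  have hframe : ∀ y ∈ U, IsDarbouxFrame (X y) (Y y) (X' y) (Y' y) := fun y hy =>
    ⟨hXY y hy, hX'Y' y hy, (horth y hy).1, (horth y hy).2.1, (horth y hy).2.2.1,
      (horth y hy).2.2.2⟩
  have hω_eq : ∀ y ∈ U, ω y = planeForm (X y) (Y y) := fun y hy =>
    hω ▸ funext₂ ((hframe y hy).symm_proj_eq_planeForm (hProj y hy))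
  have hρ_eq (y : Vec) : ρ y = Omega (vbracket X Y y - P y (vbracket X Y y)) := by rw [hρ, hZ]
  have hρ'_eq (y : Vec) : ρ' y = Omega (P y (vbracket X' Y' y)) := by rw [hρ', hZ']
  have hσ_eq (y : Vec) : σ y = fun v => ρ y v - ρ' y v := by rw [hσ]
  have hC2 {F : Vec → Vec} (hF : ContDiffOn ℝ (⊤ : ℕ∞) F U) : ContDiffAt ℝ 2 F x :=
    (hF.contDiffAt hxU).of_le (WithTop.coe_le_coe.mpr le_top)
  have hD {F : Vec → Vec} (hF : ContDiffOn ℝ (⊤ : ℕ∞) F U) : DifferentiableAt ℝ F x :=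
    (hC2 hF).differentiableAt two_ne_zero
  have hVd := differentiableAt_vbracket (hC2 hX) (hC2 hY)
  have hV'd := differentiableAt_vbracket (hC2 hX') (hC2 hY')
  have hPd : DifferentiableAt ℝ P x := (hP.contDiffAt hxU).differentiableAt (by simp)
  have hρd (v : Vec) : DifferentiableAt ℝ (fun y => ρ y v) x := by
    simp only [hρ_eq]; fun_prop
  have hσd (v : Vec) : DifferentiableAt ℝ (fun y => σ y v) x := by
    simp only [hσ_eq, hρ_eq, hρ'_eq]; fun_prop
  have hωd (v w : Vec) : DifferentiableAt ℝ (fun y => ω y v w) x := by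
    simp only [hω, div_eq_mul_inv]; fun_prop
  have hdω : d2 ω x = w21 Omega (σ x) := by
    rw [d2_congr (eventually_of_mem hxU hω_eq), d2_planeForm (eventually_of_mem hxU hframe)
      (hD hX) (hD hY) (hD hX') (hD hY') (hProj x hx), hσ_eq, hρ_eq, hρ'_eq]
  have hωσ : ∀ y ∈ U, w21 (ω y) (σ y) = w21 (ω y) (ρ y) := fun y hy => by
    rw [hσ_eq, w21_sub_right, hω_eq y hy, hρ'_eq,
      (hframe y hy).w21_planeForm_omega_proj_eq_zero (hProj y hy), sub_zero]
  have hωρ : ∀ y ∈ U, w21 (ω y) (ρ y) = w21 Omega (ρ y) := fun y hy => by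
    rw [hω_eq y hy, hρ_eq, (hframe y hy).w21_omega_omega_sub_proj (hProj y hy)]
  exact ⟨w22_d1_eq_d3_w21 hωd hσd hdω a b c d, by rw [d3_congr (eventually_of_mem hxU hωσ)],
    d3_w21_eq_w22_omega hρd (eventually_of_mem hxU hωρ) a b c d⟩
end
end

section
/- Let U ⊆ ℝ⁴ be open with coordinates (x,p,y,q) and standard symplectic form Ω = dp∧dx + dq∧dy, let D be a smooth function on U, and let D be the 2-distribution spanned by the vector fields ∂_p and ∂_x − D∂_q. Then: (a) Ω(∂_p, ∂_x − D∂_q) = 1, so D is non-Lagrangian with normalized frame; (b) the Ω-orthogonal complement D' is spanned by ∂_q and ∂_y − D∂_p, with Ω(∂_q, ∂_y − D∂_p) = 1; (c) the invariant vector fields are Z = −D_p ∂_q and Z' = −D_q ∂_p, and the invariant 1-forms are ρ = −D_p dy and ρ' = −D_q dx (subscripts denoting partial derivatives). -/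
noncomputable section

/-- The `i`-th standard basis vector (so `e 0 = ∂_x`, `e 1 = ∂_p`, `e 2 = ∂_y`,
`e 3 = ∂_q`). -/
def e (i : Fin 4) : Vec := Pi.single i 1

/-- Partial derivative in the `i`-th coordinate direction. -/
def pd (i : Fin 4) (f : Vec → ℝ) : Vec → ℝ := fun z => fderiv ℝ f z (e i)

/-! The fields `X, X'` are constant and `Y, Y'` have the form `c - D • b`, so each bracket is a
single directional derivative of `D` times a basis vector: `[X,Y] = -D_p ∂_q ∈ D'` and
`[X',Y'] = -D_q ∂_p ∈ D`, on which `P` acts as `0` and as the identity respectively. -/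

open Submodule

lemma fderiv_const_sub_smul_apply {𝕜 E F : Type*} [NontriviallyNormedField 𝕜]
    [NormedAddCommGroup E] [NormedSpace 𝕜 E] [NormedAddCommGroup F] [NormedSpace 𝕜 F]
    {f : E → 𝕜} {z : E} (hf : DifferentiableAt 𝕜 f z) (c b : F) (w : E) :
    fderiv 𝕜 (fun z => c - f z • b) z w = -(fderiv 𝕜 f z w) • b := by
  rw [fderiv_fun_sub (differentiableAt_const c) (hf.smul_const b), fderiv_fun_const,
    fderiv_smul_const hf]
  simp [neg_smul]

lemma vbracket_const_const_sub_smul {f : Vec → ℝ} {z : Vec} (hf : DifferentiableAt ℝ f z)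
    (a b c : Vec) :
    vbracket (fun _ => a) (fun z => c - f z • b) z = -(fderiv ℝ f z a) • b := by
  simp [vbracket, fderiv_const_sub_smul_apply hf]

lemma Omega_e_one_e_zero_sub_smul (t : ℝ) : Omega (e 1) (e 0 - t • e 3) = 1 := by
  simp [Omega, e]

lemma Omega_e_three_e_two_sub_smul (t : ℝ) : Omega (e 3) (e 2 - t • e 1) = 1 := by
  simp [Omega, e]

lemma Omega_smul_e_one (c : ℝ) (v : Vec) : Omega (c • e 1) v = c * v 0 := by
  simp [Omega, e]

lemma Omega_smul_e_three (c : ℝ) (v : Vec) : Omega (c • e 3) v = c * v 2 := by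
  simp [Omega, e]

/-- `Ω(∂_p, v) = v_x` and `Ω(∂_x - t∂_q, v) = -v_p - t v_y`, so the orthogonal vectors are
exactly `v_q ∂_q + v_y (∂_y - t∂_p)`. -/
lemma Omega_orthogonal_iff_mem_span (t : ℝ) (v : Vec) :
    (Omega (e 1) v = 0 ∧ Omega (e 0 - t • e 3) v = 0) ↔
      v ∈ span ℝ {e 3, e 2 - t • e 1} := by
  rw [mem_span_pair]
  constructor
  · rintro ⟨hx, hp⟩
    simp [Omega, e] at hx hp
    refine ⟨v 3, v 2, funext fun k => ?_⟩
    fin_cases k <;> simp [e, hx]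
    linarith
  · rintro ⟨a, b, rfl⟩
    constructor <;> simp [Omega, e, mul_comm]

/-- for the 2-distribution `D = ⟨∂_p, ∂_x − D∂_q⟩` on `U ⊆ ℝ⁴`
(encoding the Monge–Ampère equation `u_{xy} + D(x,y,u_x,u_y) = 0`):
(a) `Ω(∂_p, ∂_x − D∂_q) = 1`;
(b) the Ω-orthogonal complement `D'` is spanned by `∂_q` and `∂_y − D∂_p`, with
`Ω(∂_q, ∂_y − D∂_p) = 1`;
(c) the invariant vector fields are `Z = −D_p ∂_q`, `Z' = −D_q ∂_p` and the
invariant 1-forms are `ρ = −D_p dy`, `ρ' = −D_q dx`. -/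
theorem stmt_15 (U : Set Vec) (hU : IsOpen U)
    (D : Vec → ℝ) (hD : ContDiffOn ℝ (⊤ : ℕ∞) D U)
    (X Y X' Y' : Vec → Vec)
    (hX : X = fun _ => e 1) (hY : Y = fun z => e 0 - D z • e 3)
    (hX' : X' = fun _ => e 3) (hY' : Y' = fun z => e 2 - D z • e 1)
    (P : Vec → Vec →L[ℝ] Vec)
    (hProj : ∀ z ∈ U, P z (X z) = X z ∧ P z (Y z) = Y z ∧
      P z (X' z) = 0 ∧ P z (Y' z) = 0) :
    ∀ z ∈ U,
      -- (a)
      Omega (X z) (Y z) = 1 ∧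
      -- (b)
      Omega (X' z) (Y' z) = 1 ∧
      (∀ v : Vec, (Omega (X z) v = 0 ∧ Omega (Y z) v = 0) ↔
        v ∈ Submodule.span ℝ {X' z, Y' z}) ∧
      -- (c)
      vbracket X Y z - P z (vbracket X Y z) = (-(pd 1 D z)) • e 3 ∧
      P z (vbracket X' Y' z) = (-(pd 3 D z)) • e 1 ∧
      (∀ v : Vec, Omega (vbracket X Y z - P z (vbracket X Y z)) v
        = -(pd 1 D z) * v 2) ∧
      (∀ v : Vec, Omega (P z (vbracket X' Y' z)) v = -(pd 3 D z) * v 0) := by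
  intro z hz
  obtain ⟨hPX, -, hPX', -⟩ := hProj z hz
  subst hX hY hX' hY'
  have hDz : DifferentiableAt ℝ D z :=
    (hD.contDiffAt (hU.mem_nhds hz)).differentiableAt (by simp)
  have hZ : vbracket (fun _ => e 1) (fun z => e 0 - D z • e 3) z = -(pd 1 D z) • e 3 :=
    vbracket_const_const_sub_smul hDz _ _ _
  have hZ' : vbracket (fun _ => e 3) (fun z => e 2 - D z • e 1) z = -(pd 3 D z) • e 1 :=
    vbracket_const_const_sub_smul hDz _ _ _
  have hPZ : P z (-(pd 1 D z) • e 3) = 0 := by rw [map_smul, hPX', smul_zero]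
  have hPZ' : P z (-(pd 3 D z) • e 1) = -(pd 3 D z) • e 1 := by rw [map_smul, hPX]
  rw [hZ, hZ', hPZ, hPZ', sub_zero]
  exact ⟨Omega_e_one_e_zero_sub_smul _, Omega_e_three_e_two_sub_smul _,
    Omega_orthogonal_iff_mem_span _, rfl, rfl, Omega_smul_e_three _, Omega_smul_e_one _⟩
end
end

section
/- Let U ⊆ ℝ⁴ be open with coordinates (x,p,y,q), Ω = dp∧dx + dq∧dy, D a smooth function on U, and D the 2-distribution spanned by ∂_p and ∂_x − D∂_q, with invariant forms ρ = −D_p dy, ρ' = −D_q dx, σ = ρ − ρ' and invariant 2-form ω. Then ω ∧ dσ = Ω ∧ dρ = −D_{pq}·(½ Ω∧Ω); that is, the first scalar invariant is I¹_D = −D_{pq}. -/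
noncomputable section

/-!
The projection fixes `∂_p` and `∂_x − D∂_q` and kills `∂_q` and `∂_y − D∂_p`, which gives
`ω = dp∧dx + D·dy∧dx`. Every term of `dρ' = −d(D_q)∧dx` contains `dx`, and so does every term
of `ω`; hence `ω∧dσ = ω∧dρ = −dp∧dx∧d(D_p)∧dy`, in which only `D_{pq}` survives, and the same
happens for `Ω∧dρ`.
-/

lemma eq_sum_smul_e (u : Vec) : u = u 0 • e 0 + u 1 • e 1 + u 2 • e 2 + u 3 • e 3 := by
  ext i
  fin_cases i <;> simp [e]

lemma fderiv_apply_eq_sum_pd (f : Vec → ℝ) (z u : Vec) :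
    fderiv ℝ f z u = u 0 * pd 0 f z + u 1 * pd 1 f z + u 2 * pd 2 f z + u 3 * pd 3 f z := by
  conv_lhs => rw [eq_sum_smul_e u]
  simp only [map_add, map_smul, smul_eq_mul, pd]

lemma pd_neg (i : Fin 4) (f : Vec → ℝ) : pd i (fun y => -f y) = fun z => -pd i f z := by
  ext z
  simp only [pd, fderiv_fun_neg, neg_apply]

lemma ContDiffAt.differentiableAt_pd {f : Vec → ℝ} {z : Vec} (hf : ContDiffAt ℝ 2 f z)
    (i : Fin 4) : DifferentiableAt ℝ (pd i f) z :=
  ((hf.fderiv_right (m := 1) le_rfl).clm_apply contDiffAt_const).differentiableAt one_ne_zero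

lemma d1_sub {α β : Vec → Vec → ℝ} {z : Vec}
    (hα : ∀ v, DifferentiableAt ℝ (fun y => α y v) z)
    (hβ : ∀ v, DifferentiableAt ℝ (fun y => β y v) z) (u v : Vec) :
    d1 (fun y w => α y w - β y w) z u v = d1 α z u v - d1 β z u v := by
  simp only [d1, fderiv_fun_sub (hα _) (hβ _), sub_apply]
  ring

lemma d1_mul_coord {f : Vec → ℝ} {z : Vec} (hf : DifferentiableAt ℝ f z) (i : Fin 4)
    (u v : Vec) :
    d1 (fun y w => f y * w i) z u v = fderiv ℝ f z u * v i - fderiv ℝ f z v * u i := by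
  simp only [d1, fderiv_mul_const hf, smul_apply, smul_eq_mul]
  ring

lemma projection_apply {P : Vec →L[ℝ] Vec} {c : ℝ} (h1 : P (e 1) = e 1)
    (h2 : P (e 0 - c • e 3) = e 0 - c • e 3) (h3 : P (e 3) = 0) (h4 : P (e 2 - c • e 1) = 0)
    (u : Vec) : P u = ![u 0, u 1 + c * u 2, 0, -(c * u 0)] := by
  have h0 : P (e 0) = e 0 - c • e 3 := by simpa [h3] using h2
  have h2' : P (e 2) = c • e 1 := by simpa [h1, sub_eq_zero] using h4
  conv_lhs => rw [eq_sum_smul_e u]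
  simp only [map_add, map_smul, h0, h1, h2', h3, smul_zero, add_zero]
  ext j
  fin_cases j <;> simp [e] <;> ring

lemma symmetrized_Omega_projection {P : Vec →L[ℝ] Vec} {c : ℝ} (h1 : P (e 1) = e 1)
    (h2 : P (e 0 - c • e 3) = e 0 - c • e 3) (h3 : P (e 3) = 0) (h4 : P (e 2 - c • e 1) = 0)
    (u v : Vec) :
    (Omega (P u) v + Omega u (P v)) / 2 = u 1 * v 0 - u 0 * v 1 + c * (u 2 * v 0 - u 0 * v 2) := by
  simp only [Omega, projection_apply h1 h2 h3 h4, Matrix.cons_val_zero, Matrix.cons_val_one,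
    Matrix.cons_val]
  ring

/-- for the 2-distribution `⟨∂_p, ∂_x − D∂_q⟩` with invariant forms
`ρ = −D_p dy`, `ρ' = −D_q dx`, `σ = ρ − ρ'` and invariant 2-form `ω`, one has
`ω ∧ dσ = Ω ∧ dρ = −D_{pq}·(½ Ω∧Ω)`; i.e. the first scalar invariant is
`I¹ = −D_{pq}`. -/
theorem stmt_16 (U : Set Vec) (hU : IsOpen U)
    (D : Vec → ℝ) (hD : ContDiffOn ℝ (⊤ : ℕ∞) D U)
    (P : Vec → Vec →L[ℝ] Vec)
    (hProj : ∀ z ∈ U, P z (e 1) = e 1 ∧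
      P z (e 0 - D z • e 3) = e 0 - D z • e 3 ∧
      P z (e 3) = 0 ∧ P z (e 2 - D z • e 1) = 0)
    (ρ ρ' σ : Vec → Vec → ℝ) (ω : Vec → Vec → Vec → ℝ)
    (hρ : ρ = fun z v => -(pd 1 D z) * v 2)
    (hρ' : ρ' = fun z v => -(pd 3 D z) * v 0)
    (hσ : σ = fun z v => ρ z v - ρ' z v)
    (hω : ω = fun z u v => (Omega (P z u) v + Omega u (P z v)) / 2) :
    ∀ z ∈ U, ∀ a b c d : Vec,
      w22 (ω z) (d1 σ z) a b c d
        = -(pd 3 (pd 1 D) z) * (w22 Omega Omega a b c d / 2) ∧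
      w22 Omega (d1 ρ z) a b c d
        = -(pd 3 (pd 1 D) z) * (w22 Omega Omega a b c d / 2) := by
  intro z hz a b c d
  have hD2 : ContDiffAt ℝ 2 D z :=
    (hD.contDiffAt (hU.mem_nhds hz)).of_le (WithTop.coe_le_coe.mpr le_top)
  have hDp := (hD2.differentiableAt_pd 1).neg
  have hDq := (hD2.differentiableAt_pd 3).neg
  obtain ⟨h1, h2, h3, h4⟩ := hProj z hz
  have hωz : ∀ u v, ω z u v = u 1 * v 0 - u 0 * v 1 + D z * (u 2 * v 0 - u 0 * v 2) := by
    subst hω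
    exact symmetrized_Omega_projection h1 h2 h3 h4
  have hdρ : ∀ u v, d1 ρ z u v = fderiv ℝ (fun y => -pd 1 D y) z u * v 2
      - fderiv ℝ (fun y => -pd 1 D y) z v * u 2 := by
    subst hρ
    exact d1_mul_coord hDp 2
  have hdρ' : ∀ u v, d1 ρ' z u v = fderiv ℝ (fun y => -pd 3 D y) z u * v 0
      - fderiv ℝ (fun y => -pd 3 D y) z v * u 0 := by
    subst hρ'
    exact d1_mul_coord hDq 0
  have hdσ : ∀ u v, d1 σ z u v = d1 ρ z u v - d1 ρ' z u v := by
    subst hσ hρ hρ'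
    exact d1_sub (fun _ => hDp.mul_const _) (fun _ => hDq.mul_const _)
  constructor
  · simp only [w22, hωz, hdσ, hdρ, hdρ', fderiv_apply_eq_sum_pd, pd_neg, Omega]
    ring
  · simp only [w22, hdρ, fderiv_apply_eq_sum_pd, pd_neg, Omega]
    ring
end
end
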